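/- Let σ₁, σ₂ be real with σ₂ > 1/2, σ₁ + σ₂ > 1, and σ₂ ≥ σ₁ (or σ₁ > σ₂). Then for every ε > 0, ∑_{k > T} (∑_{mn=k, m<n} m^{-σ₁} n^{-σ₂})² ≪ T^{1−2σ₂+ε} when σ₁ ≥ σ₂, and ≪ T^{1−σ₁−σ₂+ε} when σ₁ < σ₂, as T → ∞. -/

import Mathlib

open Complex Filter Asymptotics Real

/-- The inner sum `∑_{mn = k, m < n} m^{-σ₁} n^{-σ₂}` over factorizations of `k`. -/
noncomputable def boxTerm (σ₁ σ₂ : ℝ) (k : ℕ) : ℝ :=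
  ∑ p ∈ (Nat.divisorsAntidiagonal k).filter (fun p => p.1 < p.2),
    (p.1 : ℝ) ^ (-σ₁) * (p.2 : ℝ) ^ (-σ₂)

/-!
Each factorization `k = mn` with `m < n` contributes at most `k^{-β}`, where
`β = min(σ₂, (σ₁ + σ₂)/2) > 1/2`, so the inner sum is at most `d(k) k^{-β}`. For `k > T` and
`1 < s ≤ 2β` this gives `d(k)² k^{-2β} ≤ T^{s - 2β} d(k)² k^{-s}`, so the tail is at most
`T^{s - 2β} ∑ d(k)² k^{-s}`. In place of the divisor bound `d(k) = O(k^ε)` we use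
`d(k)² ≤ (d ∗ d)(k)`, whose L-series is `ζ⁴` and converges for `s > 1`; the choice
`s = min(1 + ε, 2β)` gives the exponent `1 - 2β + ε`.
-/

open ArithmeticFunction LSeries.notation Finset
open scoped ArithmeticFunction.zeta ArithmeticFunction.sigma

lemma card_divisorsAntidiagonal_eq_sigma_zero (n : ℕ) : #n.divisorsAntidiagonal = σ 0 n := by
  rw [sigma_zero_apply, ← Nat.map_div_right_divisors, card_map]

/-- Two factorizations `ab = cd = n` come from a factorization `n = guvw` as
`(a, b) = (gu, vw)` and `(c, d) = (gv, uw)`. -/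
lemma sigma_zero_sq_le_sigma_zero_mul_sigma_zero (n : ℕ) : σ 0 n ^ 2 ≤ (σ 0 * σ 0) n := by
  simp only [← card_divisorsAntidiagonal_eq_sigma_zero, mul_apply, sq, ← card_product]
  rw [← card_sigma]
  refine card_le_card_of_surjOn
    (fun x => ((x.2.1.1 * x.2.1.2, x.2.2.1 * x.2.2.2), (x.2.1.1 * x.2.2.1, x.2.1.2 * x.2.2.2))) ?_
  rintro ⟨⟨a, b⟩, ⟨c, d⟩⟩ hx
  simp only [coe_product, Set.mem_prod, mem_coe, Nat.mem_divisorsAntidiagonal] at hx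
  obtain ⟨⟨rfl, hn⟩, hcd, -⟩ := hx
  obtain ⟨g, v, ⟨u, rfl⟩, ⟨w, rfl⟩, rfl⟩ := dvd_mul.mp (Dvd.intro d hcd)
  have hd : d = u * w :=
    mul_left_cancel₀ (mul_ne_zero (left_ne_zero_of_mul (left_ne_zero_of_mul hn))
      (left_ne_zero_of_mul (right_ne_zero_of_mul hn))) (by rw [hcd]; ring)
  refine ⟨⟨(g * u, v * w), ((g, u), (v, w))⟩, ?_, by simp [hd]⟩
  simp only [mem_coe, mem_sigma, mem_product, Nat.mem_divisorsAntidiagonal, true_and]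
  exact ⟨hn, left_ne_zero_of_mul hn, right_ne_zero_of_mul hn⟩

lemma LSeriesSummable_natCoe_mul {f g : ArithmeticFunction ℕ} {s : ℂ}
    (hf : LSeriesSummable ↗f s) (hg : LSeriesSummable ↗g s) : LSeriesSummable ↗(f * g) s := by
  simp only [← natCoe_apply, natCoe_mul] at *
  exact LSeriesSummable_mul hf hg

lemma LSeriesSummable_sigma_zero_mul_sigma_zero {s : ℂ} (hs : 1 < s.re) :
    LSeriesSummable ↗(σ 0 * σ 0) s := by
  have hζ : LSeriesSummable ↗ζ s := LSeriesSummable_zeta_iff.mpr hs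
  rw [← zeta_mul_pow_eq_sigma, pow_zero_eq_zeta]
  exact LSeriesSummable_natCoe_mul (LSeriesSummable_natCoe_mul hζ hζ)
    (LSeriesSummable_natCoe_mul hζ hζ)

lemma summable_sigma_zero_sq_mul_rpow_neg {s : ℝ} (hs : 1 < s) :
    Summable fun n : ℕ ↦ (σ 0 n : ℝ) ^ 2 * (n : ℝ) ^ (-s) := by
  have h := (LSeriesSummable_sigma_zero_mul_sigma_zero (s := s) (by simpa)).norm
  refine h.of_nonneg_of_le (fun n ↦ by positivity) fun n ↦ ?_
  rw [LSeries.norm_term_eq]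
  rcases eq_or_ne n 0 with rfl | hn
  · simp
  · rw [if_neg hn, ofReal_re, Complex.norm_natCast, rpow_neg (Nat.cast_nonneg n),
      ← div_eq_mul_inv]
    gcongr
    exact_mod_cast sigma_zero_sq_le_sigma_zero_mul_sigma_zero n

lemma rpow_neg_mul_rpow_neg_le {x y a b β : ℝ} (hx : 1 ≤ x) (hxy : x ≤ y) (hβb : β ≤ b)
    (hβab : 2 * β ≤ a + b) : x ^ (-a) * y ^ (-b) ≤ (x * y) ^ (-β) := by
  have hx₀ : 0 < x := by linarith
  have hy₁ : 1 ≤ y := hx.trans hxy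
  have hy₀ : 0 < y := by linarith
  have hslack : x ^ (β - a) * y ^ (β - b) ≤ 1 := by
    rcases le_or_gt β a with hβa | hβa
    · exact mul_le_one₀ (rpow_le_one_of_one_le_of_nonpos hx (by linarith)) (by positivity)
        (rpow_le_one_of_one_le_of_nonpos hy₁ (by linarith))
    · calc x ^ (β - a) * y ^ (β - b) ≤ y ^ (β - a) * y ^ (β - b) := by gcongr
        _ = y ^ ((β - a) + (β - b)) := (rpow_add hy₀ _ _).symm
        _ ≤ 1 := rpow_le_one_of_one_le_of_nonpos hy₁ (by linarith)
  calc x ^ (-a) * y ^ (-b) = (x * y) ^ (-β) * (x ^ (β - a) * y ^ (β - b)) := by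
        rw [mul_rpow hx₀.le hy₀.le, show -a = -β + (β - a) by ring,
          show -b = -β + (β - b) by ring, rpow_add hx₀, rpow_add hy₀]
        ring
    _ ≤ (x * y) ^ (-β) := mul_le_of_le_one_right (by positivity) hslack

lemma boxTerm_nonneg (σ₁ σ₂ : ℝ) (k : ℕ) : 0 ≤ boxTerm σ₁ σ₂ k :=
  sum_nonneg fun _ _ ↦ by positivity

lemma boxTerm_le_sigma_zero_mul_rpow_neg {σ₁ σ₂ β : ℝ} (hβ₂ : β ≤ σ₂) (hβ : 2 * β ≤ σ₁ + σ₂)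
    (k : ℕ) : boxTerm σ₁ σ₂ k ≤ σ 0 k * (k : ℝ) ^ (-β) := by
  calc boxTerm σ₁ σ₂ k
      ≤ ∑ _p ∈ k.divisorsAntidiagonal.filter (fun p => p.1 < p.2), (k : ℝ) ^ (-β) := by
        refine sum_le_sum fun p hp ↦ ?_
        obtain ⟨hp, hlt⟩ := mem_filter.mp hp
        have hp₁ : 1 ≤ p.1 :=
          Nat.one_le_iff_ne_zero.mpr (Nat.left_ne_zero_of_mem_divisorsAntidiagonal hp)
        have h := rpow_neg_mul_rpow_neg_le (x := p.1) (y := p.2) (by exact_mod_cast hp₁)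
          (by exact_mod_cast hlt.le) hβ₂ hβ
        rwa [← Nat.cast_mul, (Nat.mem_divisorsAntidiagonal.mp hp).1] at h
    _ ≤ ∑ _p ∈ k.divisorsAntidiagonal, (k : ℝ) ^ (-β) :=
        sum_le_sum_of_subset_of_nonneg (filter_subset _ _) fun _ _ _ ↦ by positivity
    _ = σ 0 k * (k : ℝ) ^ (-β) := by
        rw [sum_const, nsmul_eq_mul, card_divisorsAntidiagonal_eq_sigma_zero]

lemma tsum_tail_sq_le {a b : ℕ → ℝ} {β s T : ℝ} (hT : 0 < T) (hs : s ≤ 2 * β)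
    (ha : ∀ k, 0 ≤ a k) (hab : ∀ k, a k ≤ b k * (k : ℝ) ^ (-β))
    (hb : Summable fun k : ℕ ↦ b k ^ 2 * (k : ℝ) ^ (-s)) :
    ∑' k : ℕ, (if T < (k : ℝ) then a k ^ 2 else 0)
      ≤ T ^ (s - 2 * β) * ∑' k : ℕ, b k ^ 2 * (k : ℝ) ^ (-s) := by
  have hle : ∀ k : ℕ, (if T < (k : ℝ) then a k ^ 2 else 0)
      ≤ T ^ (s - 2 * β) * (b k ^ 2 * (k : ℝ) ^ (-s)) := by
    intro k
    split_ifs with hTk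
    · have hk : 0 < (k : ℝ) := hT.trans hTk
      have hpow : ((k : ℝ) ^ (-β)) ^ 2 = (k : ℝ) ^ (s - 2 * β) * (k : ℝ) ^ (-s) := by
        rw [← rpow_mul_natCast hk.le, ← rpow_add hk]
        ring_nf
      calc a k ^ 2 ≤ (b k * (k : ℝ) ^ (-β)) ^ 2 := pow_le_pow_left₀ (ha k) (hab k) 2
        _ = (k : ℝ) ^ (s - 2 * β) * (b k ^ 2 * (k : ℝ) ^ (-s)) := by
          rw [mul_pow, hpow]
          ring
        _ ≤ T ^ (s - 2 * β) * (b k ^ 2 * (k : ℝ) ^ (-s)) :=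
          mul_le_mul_of_nonneg_right (rpow_le_rpow_of_nonpos hT hTk.le (by linarith))
            (by positivity)
    · positivity
  have hsum := hb.mul_left (T ^ (s - 2 * β))
  calc ∑' k : ℕ, (if T < (k : ℝ) then a k ^ 2 else 0)
      ≤ ∑' k : ℕ, T ^ (s - 2 * β) * (b k ^ 2 * (k : ℝ) ^ (-s)) :=
        (hsum.of_nonneg_of_le (fun k ↦ by split_ifs <;> positivity) hle).tsum_le_tsum hle hsum
    _ = T ^ (s - 2 * β) * ∑' k : ℕ, b k ^ 2 * (k : ℝ) ^ (-s) := tsum_mul_left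

theorem exists_tsum_tail_boxTerm_sq_le {σ₁ σ₂ β ε : ℝ} (hβ : 1 / 2 < β) (hβ₂ : β ≤ σ₂)
    (hβ₁₂ : 2 * β ≤ σ₁ + σ₂) (hε : 0 < ε) :
    ∃ K > (0 : ℝ), ∀ T : ℝ, 1 ≤ T →
      (∑' k : ℕ, if T < (k : ℝ) then (boxTerm σ₁ σ₂ k) ^ 2 else 0) ≤ K * T ^ (1 - 2 * β + ε) := by
  set s := min (1 + ε) (2 * β)
  have hs : 1 < s := lt_min (by linarith) (by linarith)
  set C := ∑' k : ℕ, (σ 0 k : ℝ) ^ 2 * (k : ℝ) ^ (-s)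
  have hC : 0 ≤ C := tsum_nonneg fun _ ↦ by positivity
  refine ⟨C + 1, by linarith, fun T hT ↦ ?_⟩
  calc _ ≤ T ^ (s - 2 * β) * C :=
        tsum_tail_sq_le (by linarith) (min_le_right _ _) (boxTerm_nonneg σ₁ σ₂)
          (boxTerm_le_sigma_zero_mul_rpow_neg hβ₂ hβ₁₂) (summable_sigma_zero_sq_mul_rpow_neg hs)
    _ ≤ T ^ (1 - 2 * β + ε) * (C + 1) :=
        mul_le_mul (rpow_le_rpow_of_exponent_le hT (by linarith [min_le_left (1 + ε) (2 * β)]))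
          (by linarith) hC (by positivity)
    _ = (C + 1) * T ^ (1 - 2 * β + ε) := mul_comm _ _

theorem stmt15 (σ₁ σ₂ : ℝ) (h₂ : 1/2 < σ₂) (h : 1 < σ₁ + σ₂) (ε : ℝ) (hε : 0 < ε) :
    ∃ K > (0 : ℝ), ∀ T : ℝ, 1 ≤ T →
      (∑' k : ℕ, if T < (k : ℝ) then (boxTerm σ₁ σ₂ k) ^ 2 else 0)
        ≤ K * (if σ₂ ≤ σ₁ then T ^ (1 - 2 * σ₂ + ε) else T ^ (1 - σ₁ - σ₂ + ε)) := by
  rcases le_or_gt σ₂ σ₁ with hσ | hσ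
  · simp only [if_pos hσ]
    exact exists_tsum_tail_boxTerm_sq_le h₂ le_rfl (by linarith) hε
  · simp only [if_neg hσ.not_ge]
    have hbound := exists_tsum_tail_boxTerm_sq_le (σ₁ := σ₁) (σ₂ := σ₂) (β := (σ₁ + σ₂) / 2)
      (by linarith) (by linarith) (by linarith) hε
    rwa [show 1 - 2 * ((σ₁ + σ₂) / 2) + ε = 1 - σ₁ - σ₂ + ε by ring] at hbound
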